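/- Let ℓ, k₁ ≥ 1, k₂ ≥ 1, and ρ ∈ ℤ. The ring ℤ[v₁,…,v_{ℓ+1}, w₁,…,w_{k₁+k₂}] modulo the ideal generated by v₁⋯v_{ℓ+1}, w₁⋯w_{k₁+k₂}, the elements vᵢ + v_{ℓ+1} (1 ≤ i ≤ ℓ), w_j + ρ·v_{ℓ+1} + w_{k₁+k₂} (1 ≤ j ≤ k₁), and w_j + w_{k₁+k₂} (k₁+1 ≤ j ≤ k₁+k₂−1), is isomorphic to ℤ[x,y]/⟨x^{ℓ+1}, y^{k₂}·(y + ρx)^{k₁}⟩. -/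

import Mathlib

/-!
The linear relations express every generator through `x = v_{ℓ+1}` and `y = w_{k₁+k₂}`:
the substitution `v_i ↦ -x`, `w_j ↦ -(y + ρx)` resp. `-y` is a surjection onto `ℤ[x, y]`, split
by `x ↦ v_{ℓ+1}`, `y ↦ w_{k₁+k₂}`, and this splitting inverts it modulo the linear relations.
The substitution sends the two monomial relations to `±x^{ℓ+1}` and `±y^{k₂}(y + ρx)^{k₁}`.
-/

open MvPolynomial

noncomputable def Ideal.quotientAlgEquivMapOfLeftInverse {R A B : Type*} [CommRing R]
    [CommRing A] [CommRing B] [Algebra R A] [Algebra R B] (I : Ideal A) (φ : A →ₐ[R] B)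
    (ψ : B →ₐ[R] A) (hφψ : φ.comp ψ = AlgHom.id R B)
    (hψφ : (Ideal.Quotient.mkₐ R I).comp (ψ.comp φ) = Ideal.Quotient.mkₐ R I) :
    (A ⧸ I) ≃ₐ[R] B ⧸ I.map φ :=
  have hφψ' (b : B) : φ (ψ b) = b := AlgHom.congr_fun hφψ b
  have hψφ' (a : A) : Ideal.Quotient.mk I (ψ (φ a)) = Ideal.Quotient.mk I a :=
    AlgHom.congr_fun hψφ a
  AlgEquiv.ofAlgHom (Ideal.quotientMapₐ _ φ Ideal.le_comap_map)
    (Ideal.quotientMapₐ _ ψ <| Ideal.map_le_iff_le_comap.mpr fun a ha => by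
      rw [Ideal.mem_comap, Ideal.mem_comap, ← Ideal.Quotient.eq_zero_iff_mem, hψφ',
        Ideal.Quotient.eq_zero_iff_mem]
      exact ha)
    (Ideal.Quotient.algHom_ext R <| AlgHom.ext fun b => by simp [hφψ'])
    (Ideal.Quotient.algHom_ext R <| AlgHom.ext fun a => by simp [hψφ'])

theorem Ideal.Quotient.mk_neg_eq_mk_of_add_mem {A : Type*} [CommRing A] {I : Ideal A} {a c : A}
    (h : a + c ∈ I) : Ideal.Quotient.mk I (-c) = Ideal.Quotient.mk I a :=
  Ideal.Quotient.eq.mpr (by convert neg_mem h using 1; ring)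

namespace DavisJanuszkiewicz

-- Throughout, `k₂ = b + 1`, and `w_{k₁+k₂}` is the variable indexed by `lastW k₁ b`.
variable (ℓ k₁ b : ℕ) (ρ : ℤ)

abbrev Poly := MvPolynomial (Fin (ℓ + 1) ⊕ Fin (k₁ + (b + 1))) ℤ

def lastW : Fin (k₁ + (b + 1)) := Fin.natAdd k₁ (Fin.last b)

noncomputable def relIdeal : Ideal (Poly ℓ k₁ b) :=
  Ideal.span
    (({∏ i : Fin (ℓ + 1), X (Sum.inl i), ∏ j : Fin (k₁ + (b + 1)), X (Sum.inr j)} :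
        Set (Poly ℓ k₁ b)) ∪
      {p | ∃ i : Fin (ℓ + 1), (i : ℕ) < ℓ ∧ p = X (Sum.inl i) + X (Sum.inl (Fin.last ℓ))} ∪
      {p | ∃ j : Fin (k₁ + (b + 1)), (j : ℕ) < k₁ ∧
          p = X (Sum.inr j) + C ρ * X (Sum.inl (Fin.last ℓ)) + X (Sum.inr (lastW k₁ b))} ∪
      {p | ∃ j : Fin (k₁ + (b + 1)), k₁ ≤ (j : ℕ) ∧ (j : ℕ) < k₁ + b ∧
          p = X (Sum.inr j) + X (Sum.inr (lastW k₁ b))})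

noncomputable def substXY : Poly ℓ k₁ b →ₐ[ℤ] MvPolynomial (Fin 2) ℤ :=
  aeval <| Sum.elim (fun i => if (i : ℕ) < ℓ then -X 0 else X 0)
    (fun j => if (j : ℕ) < k₁ then -(X 1 + C ρ * X 0) else if (j : ℕ) < k₁ + b then -X 1 else X 1)

noncomputable def embedXY : MvPolynomial (Fin 2) ℤ →ₐ[ℤ] Poly ℓ k₁ b :=
  aeval ![X (Sum.inl (Fin.last ℓ)), X (Sum.inr (lastW k₁ b))]

theorem substXY_comp_embedXY :
    (substXY ℓ k₁ b ρ).comp (embedXY ℓ k₁ b) = AlgHom.id ℤ _ := by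
  ext i
  fin_cases i <;> simp [substXY, embedXY, lastW]

theorem substXY_prod_X_inl :
    substXY ℓ k₁ b ρ (∏ i : Fin (ℓ + 1), X (Sum.inl i)) = (-1) ^ ℓ * X 0 ^ (ℓ + 1) := by
  rw [substXY, map_prod, Fin.prod_univ_castSucc]
  simp only [aeval_X, Sum.elim_inl, Fin.val_castSucc, Fin.is_lt, if_true, Fin.val_last,
    lt_self_iff_false, if_false, Finset.prod_const, Finset.card_univ, Fintype.card_fin]
  ring

theorem substXY_prod_X_inr :
    substXY ℓ k₁ b ρ (∏ j : Fin (k₁ + (b + 1)), X (Sum.inr j)) =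
      (-1) ^ (k₁ + b) * (X 1 ^ (b + 1) * (X 1 + C ρ * X 0) ^ k₁) := by
  rw [substXY, map_prod, Fin.prod_univ_add, Fin.prod_univ_castSucc]
  simp only [aeval_X, Sum.elim_inr, Fin.val_castAdd, Fin.val_natAdd, Fin.val_castSucc,
    Fin.val_last, Fin.is_lt, if_true, add_lt_iff_neg_left, not_lt_zero, if_false,
    add_lt_add_iff_left, lt_self_iff_false, Finset.prod_const, Finset.card_univ, Fintype.card_fin]
  rw [neg_pow, neg_pow (X 1 : MvPolynomial (Fin 2) ℤ)]
  ring

noncomputable def targetIdeal : Ideal (MvPolynomial (Fin 2) ℤ) :=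
  Ideal.span {X 0 ^ (ℓ + 1), X 1 ^ (b + 1) * (X 1 + C ρ * X 0) ^ k₁}

theorem mkₐ_comp_embedXY_comp_substXY :
    (Ideal.Quotient.mkₐ ℤ (relIdeal ℓ k₁ b ρ)).comp ((embedXY ℓ k₁ b).comp (substXY ℓ k₁ b ρ)) =
      Ideal.Quotient.mkₐ ℤ _ := by
  ext (i | j) : 1
  all_goals simp only [AlgHom.comp_apply, substXY, aeval_X, Sum.elim_inl, Sum.elim_inr,
    Ideal.Quotient.mkₐ_eq_mk]
  · split_ifs with hi
    · simp only [embedXY, map_neg, aeval_X, Matrix.cons_val_zero]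
      exact Ideal.Quotient.mk_neg_eq_mk_of_add_mem
        (Ideal.subset_span (Or.inl (Or.inl (Or.inr ⟨i, hi, rfl⟩))))
    · obtain rfl := Fin.eq_last_of_not_lt hi
      simp [embedXY]
  · split_ifs with hj₁ hj₂
    · simp only [embedXY, map_neg, map_add, map_mul, aeval_X, aeval_C, algebraMap_eq,
        Matrix.cons_val_zero, Matrix.cons_val_one]
      have hmem : _ ∈ relIdeal ℓ k₁ b ρ := Ideal.subset_span (Or.inl (Or.inr ⟨j, hj₁, rfl⟩))
      refine Ideal.Quotient.mk_neg_eq_mk_of_add_mem ?_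
      convert hmem using 1
      ring
    · simp only [embedXY, map_neg, aeval_X, Matrix.cons_val_one, Matrix.cons_val_zero]
      exact Ideal.Quotient.mk_neg_eq_mk_of_add_mem
        (Ideal.subset_span (Or.inr ⟨j, not_lt.mp hj₁, hj₂, rfl⟩))
    · obtain rfl : j = lastW k₁ b := Fin.ext (by simp [lastW]; omega)
      simp [embedXY]

theorem map_substXY_relIdeal :
    (relIdeal ℓ k₁ b ρ).map (substXY ℓ k₁ b ρ) = targetIdeal ℓ k₁ b ρ := by
  have hunit (n : ℕ) : IsUnit ((-1 : MvPolynomial (Fin 2) ℤ) ^ n) := isUnit_neg_one.pow n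
  refine le_antisymm (Ideal.map_le_iff_le_comap.mpr <| Ideal.span_le.mpr ?_)
    (Ideal.span_le.mpr ?_)
  · rintro p ((((rfl | rfl) | ⟨i, hi, rfl⟩) | ⟨j, hj, rfl⟩) | ⟨j, hj₁, hj₂, rfl⟩) <;>
      rw [SetLike.mem_coe, Ideal.mem_comap]
    · rw [substXY_prod_X_inl, Ideal.unit_mul_mem_iff_mem _ (hunit _)]
      exact Ideal.subset_span (Set.mem_insert _ _)
    · rw [substXY_prod_X_inr, Ideal.unit_mul_mem_iff_mem _ (hunit _)]
      exact Ideal.subset_span (Set.mem_insert_of_mem _ rfl)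
    · simp [substXY, hi]
    · simp [substXY, lastW, hj]
    · simp [substXY, lastW, hj₂, not_lt.mpr hj₁]
  · rintro p (rfl | rfl)
    · rw [SetLike.mem_coe, ← Ideal.unit_mul_mem_iff_mem _ (hunit ℓ), ← substXY_prod_X_inl]
      exact Ideal.mem_map_of_mem _
        (Ideal.subset_span (Or.inl (Or.inl (Or.inl (Set.mem_insert _ _)))))
    · rw [SetLike.mem_coe, ← Ideal.unit_mul_mem_iff_mem _ (hunit (k₁ + b)), ← substXY_prod_X_inr]
      exact Ideal.mem_map_of_mem _
        (Ideal.subset_span (Or.inl (Or.inl (Or.inl (Set.mem_insert_of_mem _ rfl)))))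

noncomputable def quotientAlgEquiv :
    (Poly ℓ k₁ b ⧸ relIdeal ℓ k₁ b ρ) ≃ₐ[ℤ] MvPolynomial (Fin 2) ℤ ⧸ targetIdeal ℓ k₁ b ρ :=
  (Ideal.quotientAlgEquivMapOfLeftInverse _ _ _ (substXY_comp_embedXY ℓ k₁ b ρ)
    (mkₐ_comp_embedXY_comp_substXY ℓ k₁ b ρ)).trans
    (Ideal.quotientEquivAlgOfEq ℤ (map_substXY_relIdeal ℓ k₁ b ρ))

end DavisJanuszkiewicz

theorem stmt4 (ℓ k₁ k₂ : ℕ) (hk₂ : 1 ≤ k₂) (ρ : ℤ) :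
    Nonempty
      ((MvPolynomial (Fin (ℓ + 1) ⊕ Fin (k₁ + k₂)) ℤ ⧸
          Ideal.span
            (({∏ i : Fin (ℓ + 1), X (Sum.inl i), ∏ j : Fin (k₁ + k₂), X (Sum.inr j)} :
                Set (MvPolynomial (Fin (ℓ + 1) ⊕ Fin (k₁ + k₂)) ℤ)) ∪
              {p | ∃ i : Fin (ℓ + 1), (i : ℕ) < ℓ ∧
                  p = X (Sum.inl i) + X (Sum.inl (Fin.last ℓ))} ∪
              {p | ∃ j : Fin (k₁ + k₂), (j : ℕ) < k₁ ∧
                  p = X (Sum.inr j) + C ρ * X (Sum.inl (Fin.last ℓ)) +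
                    X (Sum.inr ⟨k₁ + k₂ - 1, by omega⟩)} ∪
              {p | ∃ j : Fin (k₁ + k₂), k₁ ≤ (j : ℕ) ∧ (j : ℕ) < k₁ + k₂ - 1 ∧
                  p = X (Sum.inr j) + X (Sum.inr ⟨k₁ + k₂ - 1, by omega⟩)})) ≃+*
        (MvPolynomial (Fin 2) ℤ ⧸
          Ideal.span ({X 0 ^ (ℓ + 1), X 1 ^ k₂ * (X 1 + C ρ * X 0) ^ k₁} :
            Set (MvPolynomial (Fin 2) ℤ)))) := by
  obtain ⟨b, rfl⟩ : ∃ b, k₂ = b + 1 := ⟨k₂ - 1, by omega⟩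
  exact ⟨(DavisJanuszkiewicz.quotientAlgEquiv ℓ k₁ b ρ).toRingEquiv⟩
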